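/- Let S_1(x) = #{ c ≤ x : c = 2^a + b for some a ∈ ℕ, b ∈ B_j }, where B_j = { n : d_j ∣ n } ∩ [2^{2^{j^2}}, 2^{2^{(j+1)^2}}) and j is determined by 2^{2^{j^2}} ≤ x < 2^{2^{(j+1)^2}}. Then S_1(x) ≤ x ∏_{p ≤ p_j, p odd} (1 − 1/p) + 2^j. -/
import Mathlib


open Real Filter

/-- The `i`-th odd prime (1-indexed): `oddPrime 1 = 3`, `oddPrime 2 = 5`, ... -/
noncomputable def oddPrime (i : ℕ) : ℕ := Nat.nth (fun p => p.Prime ∧ Odd p) (i - 1)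

/-- `dProd j` is the product of the first `j` odd primes. -/
noncomputable def dProd (j : ℕ) : ℕ := ∏ i ∈ Finset.Icc 1 j, oddPrime i

/-- `Bt t = { n : dProd t ∣ n } ∩ [2^(2^(t^2)), 2^(2^((t+1)^2)))`. -/
noncomputable def Bt (t : ℕ) : Set ℕ :=
  {n | dProd t ∣ n ∧ 2 ^ 2 ^ t ^ 2 ≤ n ∧ n < 2 ^ 2 ^ (t + 1) ^ 2}

/-- `Bset = ⋃_{t ≥ 1} Bt t`. -/
noncomputable def Bset : Set ℕ := ⋃ t ≥ 1, Bt t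

/-- Counting function of a set of naturals: number of elements `≤ x`. -/
noncomputable def countOf (S : Set ℕ) (x : ℝ) : ℕ := Nat.card {n : ℕ | n ∈ S ∧ (n : ℝ) ≤ x}

lemma oddPrimes_infinite : {p : ℕ | p.Prime ∧ Odd p}.Infinite := by
  have h : {p : ℕ | p.Prime ∧ Odd p} = {p | p.Prime} \ {2} := by
    ext p
    simp only [Set.mem_setOf_eq, Set.mem_diff, Set.mem_singleton_iff]
    constructor
    · rintro ⟨hp, ho⟩
      refine ⟨hp, ?_⟩
      rintro rfl
      simp [Nat.odd_iff] at ho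
    · rintro ⟨hp, hne⟩
      exact ⟨hp, hp.odd_of_ne_two hne⟩
  rw [h]
  exact Nat.infinite_setOf_prime.diff (Set.finite_singleton 2)

lemma oddPrime_spec (i : ℕ) : (oddPrime i).Prime ∧ Odd (oddPrime i) :=
  Nat.nth_mem_of_infinite oddPrimes_infinite (i - 1)

lemma oddPrime_injOn (j : ℕ) : Set.InjOn oddPrime (Finset.Icc 1 j : Set ℕ) := by
  intro a ha b hb hab
  simp only [Finset.coe_Icc, Set.mem_Icc] at ha hb
  have := Nat.nth_injective oddPrimes_infinite hab
  omega

lemma prod_ite_dvd (S : Finset ℕ) (hS : ∀ p ∈ S, p.Prime) (n : ℕ) :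
    (∏ p ∈ S, if p ∣ n then (1:ℝ) else 0) = if (∏ p ∈ S, p) ∣ n then 1 else 0 := by
  by_cases h : ∀ p ∈ S, p ∣ n
  · rw [if_pos (Finset.prod_primes_dvd n (fun p hp => (hS p hp).prime) h),
      Finset.prod_eq_one (fun p hp => if_pos (h p hp))]
  · push_neg at h
    obtain ⟨p, hp, hd⟩ := h
    have h0 : (∏ q ∈ S, if q ∣ n then (1:ℝ) else 0) = 0 :=
      Finset.prod_eq_zero hp (by rw [if_neg hd])
    rw [h0, if_neg]
    intro hdvd
    exact hd (dvd_trans (Finset.dvd_prod_of_mem _ hp) hdvd)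

lemma count_bound (P : Finset ℕ) (hP : ∀ p ∈ P, p.Prime) (N : ℕ) :
    ((((Finset.Icc 1 N).filter (fun n => ∀ p ∈ P, ¬ p ∣ n)).card : ℝ))
      ≤ (N : ℝ) * ∏ p ∈ P, (1 - 1 / (p : ℝ)) + 2 ^ P.card := by
  classical
  have key : ((((Finset.Icc 1 N).filter (fun n => ∀ p ∈ P, ¬ p ∣ n)).card : ℝ))
      = ∑ S ∈ P.powerset, (-1:ℝ)^S.card * ((N / ∏ p ∈ S, p : ℕ) : ℝ) := by
    have hcard : ((((Finset.Icc 1 N).filter (fun n => ∀ p ∈ P, ¬ p ∣ n)).card : ℝ))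
        = ∑ n ∈ Finset.Icc 1 N, ∏ p ∈ P, ((1 : ℝ) - if p ∣ n then 1 else 0) := by
      rw [Finset.card_filter]
      push_cast
      refine Finset.sum_congr rfl fun n _ => ?_
      by_cases h : ∀ p ∈ P, ¬ p ∣ n
      · rw [if_pos h, Finset.prod_eq_one]
        intro p hp
        rw [if_neg (h p hp)]; ring
      · rw [if_neg h]
        push_neg at h
        obtain ⟨p, hp, hd⟩ := h
        rw [Finset.prod_eq_zero hp]
        rw [if_pos hd]; ring
    have step : ∀ n : ℕ, (∏ p ∈ P, ((1:ℝ) - if p ∣ n then 1 else 0))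
        = ∑ S ∈ P.powerset, (-1:ℝ)^S.card * (if (∏ p ∈ S, p) ∣ n then 1 else 0) := by
      intro n
      have hpa := Finset.prod_add (fun p => -(if p ∣ n then (1:ℝ) else 0)) (fun _ => (1:ℝ)) P
      simp only [Finset.prod_const_one, mul_one] at hpa
      calc ∏ p ∈ P, ((1:ℝ) - if p ∣ n then 1 else 0)
          = ∏ p ∈ P, (-(if p ∣ n then (1:ℝ) else 0) + 1) := by
            refine Finset.prod_congr rfl fun p _ => by ring
        _ = ∑ S ∈ P.powerset, ∏ p ∈ S, -(if p ∣ n then (1:ℝ) else 0) := hpa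
        _ = ∑ S ∈ P.powerset, (-1:ℝ)^S.card * (if (∏ p ∈ S, p) ∣ n then 1 else 0) := by
            refine Finset.sum_congr rfl fun S hS => ?_
            have hSsub := Finset.mem_powerset.mp hS
            rw [← prod_ite_dvd S (fun p hp => hP p (hSsub hp)) n]
            rw [show (fun p => -(if p ∣ n then (1:ℝ) else 0)) = fun p => (-1) * (if p ∣ n then (1:ℝ) else 0) by funext p; ring]
            rw [Finset.prod_mul_distrib, Finset.prod_const]
    rw [hcard]
    simp only [step]
    rw [Finset.sum_comm]
    refine Finset.sum_congr rfl fun S hS => ?_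
    rw [← Finset.mul_sum]
    congr 1
    rw [Finset.sum_boole]
    congr 1
    rw [show Finset.Icc 1 N = Finset.Ioc 0 N from Finset.Icc_add_one_left_eq_Ioc 0 N,
      Nat.Ioc_filter_dvd_card_eq_div]
  rw [key]
  have hbound : ∑ S ∈ P.powerset, (-1:ℝ)^S.card * ((N / ∏ p ∈ S, p : ℕ) : ℝ)
      ≤ ∑ S ∈ P.powerset, ((-1:ℝ)^S.card * ((N:ℝ) / ((∏ p ∈ S, p : ℕ) : ℝ)) + 1) := by
    refine Finset.sum_le_sum fun S hS => ?_
    have hSsub := Finset.mem_powerset.mp hS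
    have hpos : 0 < (∏ p ∈ S, p : ℕ) :=
      Finset.prod_pos fun p hp => (hP p (hSsub hp)).pos
    have hub : ((N / ∏ p ∈ S, p : ℕ) : ℝ) ≤ (N:ℝ) / ((∏ p ∈ S, p : ℕ) : ℝ) :=
      Nat.cast_div_le
    have hlb : (N:ℝ) / ((∏ p ∈ S, p : ℕ) : ℝ) < ((N / ∏ p ∈ S, p : ℕ) : ℝ) + 1 := by
      rw [div_lt_iff₀ (by exact_mod_cast hpos)]
      have hd := Nat.div_add_mod N (∏ p ∈ S, p)
      have hm := Nat.mod_lt N hpos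
      have : N < (N / ∏ p ∈ S, p + 1) * (∏ p ∈ S, p) := by nlinarith
      calc (N:ℝ) = ((N:ℕ):ℝ) := rfl
        _ < (((N / ∏ p ∈ S, p + 1) * (∏ p ∈ S, p) : ℕ) : ℝ) := by exact_mod_cast this
        _ = (((N / ∏ p ∈ S, p : ℕ):ℝ) + 1) * ((∏ p ∈ S, p : ℕ):ℝ) := by push_cast; ring
    rcases Nat.even_or_odd S.card with he | ho
    · rw [he.neg_one_pow]
      nlinarith
    · rw [ho.neg_one_pow]
      nlinarith
  have hsum2 : ∑ S ∈ P.powerset, ((-1:ℝ)^S.card * ((N:ℝ) / ((∏ p ∈ S, p : ℕ) : ℝ)) + 1)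
      = (N : ℝ) * ∏ p ∈ P, (1 - 1 / (p : ℝ)) + 2 ^ P.card := by
    rw [Finset.sum_add_distrib, Finset.sum_const, Finset.card_powerset, nsmul_eq_mul, mul_one]
    congr 1
    · have hpa := Finset.prod_add (fun p : ℕ => -(1 / (p:ℝ))) (fun _ => (1:ℝ)) P
      simp only [Finset.prod_const_one, mul_one] at hpa
      have hprod : ∏ p ∈ P, ((1:ℝ) - 1 / (p:ℝ))
          = ∑ S ∈ P.powerset, (-1:ℝ)^S.card * (1 / ((∏ p ∈ S, p : ℕ) : ℝ)) := by
        calc ∏ p ∈ P, ((1:ℝ) - 1 / (p:ℝ))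
            = ∏ p ∈ P, (-(1 / (p:ℝ)) + 1) := by
              refine Finset.prod_congr rfl fun p _ => by ring
          _ = ∑ S ∈ P.powerset, ∏ p ∈ S, -(1 / (p:ℝ)) := hpa
          _ = _ := by
              refine Finset.sum_congr rfl fun S hS => ?_
              rw [show (fun p : ℕ => -(1 / (p:ℝ))) = fun p : ℕ => (-1) * (1 / (p:ℝ)) by funext p; ring]
              rw [Finset.prod_mul_distrib, Finset.prod_const]
              congr 1
              simp only [one_div]
              rw [Finset.prod_inv_distrib, Nat.cast_prod]
      rw [hprod, Finset.mul_sum]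
      refine Finset.sum_congr rfl fun S hS => ?_
      ring
    · push_cast
      ring
  linarith

theorem stmt_7 (x : ℝ) (j : ℕ) (hj : 1 ≤ j)
    (h1 : (2 : ℝ) ^ (2 ^ (j ^ 2) : ℕ) ≤ x)
    (h2 : x < (2 : ℝ) ^ (2 ^ ((j + 1) ^ 2) : ℕ)) :
    (Nat.card {c : ℕ | (c : ℝ) ≤ x ∧ ∃ a : ℕ, 1 ≤ a ∧ ∃ b ∈ Bt j, c = 2 ^ a + b} : ℝ) ≤
      x * ∏ i ∈ Finset.Icc 1 j, (1 - 1 / (oddPrime i : ℝ)) + 2 ^ j := by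
  classical
  have hx0 : (0:ℝ) ≤ x := le_trans (by positivity) h1
  set N := ⌊x⌋₊ with hN
  set P : Finset ℕ := (Finset.Icc 1 j).image oddPrime with hPdef
  have hP : ∀ p ∈ P, p.Prime := by
    intro p hp
    obtain ⟨i, hi, rfl⟩ := Finset.mem_image.mp hp
    exact (oddPrime_spec i).1
  have hPcard : P.card = j := by
    rw [hPdef, Finset.card_image_of_injOn (oddPrime_injOn j), Nat.card_Icc]
    omega
  set F := (Finset.Icc 1 N).filter (fun n => ∀ p ∈ P, ¬ p ∣ n) with hF
  have hsub : {c : ℕ | (c : ℝ) ≤ x ∧ ∃ a : ℕ, 1 ≤ a ∧ ∃ b ∈ Bt j, c = 2 ^ a + b} ⊆ ↑F := by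
    rintro c ⟨hcx, a, ha, b, hb, rfl⟩
    simp only [hF, Finset.coe_filter, Set.mem_setOf_eq, Finset.mem_Icc]
    obtain ⟨hdvd, hlb, hub⟩ := hb
    refine ⟨⟨le_trans Nat.one_le_two_pow (Nat.le_add_right _ _), Nat.le_floor hcx⟩, ?_⟩
    intro p hp hpc
    obtain ⟨i, hi, rfl⟩ := Finset.mem_image.mp hp
    obtain ⟨hprime, hodd⟩ := oddPrime_spec i
    have hpb : oddPrime i ∣ b := dvd_trans (Finset.dvd_prod_of_mem _ hi) hdvd
    have hpa : oddPrime i ∣ 2 ^ a := by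
      have := Nat.dvd_sub hpc hpb
      simpa using this
    have := (Nat.prime_dvd_prime_iff_eq hprime Nat.prime_two).mp (hprime.dvd_of_dvd_pow hpa)
    rw [this] at hodd
    simp [Nat.odd_iff] at hodd
  have hcount : (Nat.card {c : ℕ | (c : ℝ) ≤ x ∧ ∃ a : ℕ, 1 ≤ a ∧ ∃ b ∈ Bt j, c = 2 ^ a + b} : ℝ)
      ≤ (F.card : ℝ) := by
    have h1 := Nat.card_mono F.finite_toSet hsub
    simp only [Nat.card_coe_set_eq, Set.ncard_coe_finset] at h1
    rw [Nat.card_coe_set_eq]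
    exact_mod_cast h1
  have hmain := count_bound P hP N
  have hprodeq : ∏ p ∈ P, (1 - 1 / (p : ℝ)) = ∏ i ∈ Finset.Icc 1 j, (1 - 1 / (oddPrime i : ℝ)) := by
    rw [hPdef, Finset.prod_image]
    exact fun a ha b hb hab => oddPrime_injOn j (by simpa using ha) (by simpa using hb) hab
  have hprodnn : 0 ≤ ∏ i ∈ Finset.Icc 1 j, (1 - 1 / (oddPrime i : ℝ)) := by
    refine Finset.prod_nonneg fun i _ => ?_
    have h2le : (2:ℝ) ≤ (oddPrime i : ℝ) := by exact_mod_cast (oddPrime_spec i).1.two_le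
    have : 1 / (oddPrime i : ℝ) ≤ 1 := by
      rw [div_le_one (by linarith)]; linarith
    linarith
  have hNx : (N : ℝ) ≤ x := Nat.floor_le hx0
  rw [hprodeq, hPcard] at hmain
  calc (Nat.card {c : ℕ | (c : ℝ) ≤ x ∧ ∃ a : ℕ, 1 ≤ a ∧ ∃ b ∈ Bt j, c = 2 ^ a + b} : ℝ)
      ≤ (F.card : ℝ) := hcount
    _ ≤ (N : ℝ) * ∏ i ∈ Finset.Icc 1 j, (1 - 1 / (oddPrime i : ℝ)) + 2 ^ j := hmain
    _ ≤ x * ∏ i ∈ Finset.Icc 1 j, (1 - 1 / (oddPrime i : ℝ)) + 2 ^ j := by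
        have := mul_le_mul_of_nonneg_right hNx hprodnn
        linarith
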